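/- Let V = {+1,-1}^n, fix a coordinate i, and for U ⊆ V define the symmetrization U' = U_{i→+} ∪ U_{i→-}, where U_{i→±} replaces the i-th coordinate of every element of U by ±1. Let H ⊆ V be nonempty, let α = max over nonempty U ⊆ V of Φ(U) where Φ(U) = (|E(U,U)| - Σ_{u∈U} dist(u,H))/|U|, and define g(U) = |E(U,U)| - Σ_{u∈U} dist(u,H) - α·|U|. If U is a nonempty set achieving Φ(U) = α, then g(U') ≥ g(U), where U' is the symmetrization of U with respect to coordinate i. -/

import Mathlib

open Finset

/-- Twice the number of hypercube edges with both endpoints in `U`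
(ordered pairs of elements of `U` at Hamming distance 1). -/
def edgePairs {n : ℕ} (U : Finset (Fin n → Bool)) : ℕ :=
  ((U ×ˢ U).filter fun p => hammingDist p.1 p.2 = 1).card

/-- The discounted edge density `Φ(U) = (|E(U,U)| - Σ_{u∈U} dist(u,H)) / |U|`. -/
noncomputable def Phi {n : ℕ} (H : Finset (Fin n → Bool)) (hH : H.Nonempty)
    (U : Finset (Fin n → Bool)) : ℝ :=
  ((edgePairs U : ℝ) / 2 - ∑ u ∈ U, ((H.inf' hH fun h => hammingDist u h : ℕ) : ℝ)) / U.card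

/-- `g(U) = |E(U,U)| - Σ_{u∈U} dist(u,H) - α·|U|`. -/
noncomputable def gFun {n : ℕ} (H : Finset (Fin n → Bool)) (hH : H.Nonempty) (α : ℝ)
    (U : Finset (Fin n → Bool)) : ℝ :=
  (edgePairs U : ℝ) / 2 - (∑ u ∈ U, ((H.inf' hH fun h => hammingDist u h : ℕ) : ℝ)) -
    α * U.card

def flipi {n : ℕ} (i : Fin n) (x : Fin n → Bool) : Fin n → Bool :=
  Function.update x i (!(x i))

lemma flipi_apply_i {n : ℕ} (i : Fin n) (x : Fin n → Bool) : flipi i x i = !(x i) := by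
  simp [flipi]

lemma flipi_apply_ne {n : ℕ} (i j : Fin n) (x : Fin n → Bool) (h : j ≠ i) :
    flipi i x j = x j := by
  simp [flipi, Function.update_of_ne h]

lemma flipi_invol {n : ℕ} (i : Fin n) (x : Fin n → Bool) : flipi i (flipi i x) = x := by
  funext j
  by_cases h : j = i
  · subst h; simp [flipi_apply_i]
  · simp [flipi_apply_ne _ _ _ h]

lemma flipi_injective {n : ℕ} (i : Fin n) : Function.Injective (flipi i) :=
  Function.LeftInverse.injective (flipi_invol i)

lemma hd_flipi {n : ℕ} (i : Fin n) (x : Fin n → Bool) : hammingDist x (flipi i x) = 1 := by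
  have : ({j | x j ≠ flipi i x j} : Finset (Fin n)) = {i} := by
    ext j
    simp only [Finset.mem_filter, Finset.mem_univ, true_and, Finset.mem_singleton,
      Finset.mem_singleton]
    constructor
    · intro h
      by_contra hj
      exact h (flipi_apply_ne _ _ _ hj).symm
    · intro h; subst h; simp [flipi_apply_i]
  simp [hammingDist, this]

lemma hd_flipi_flipi {n : ℕ} (i : Fin n) (x y : Fin n → Bool) :
    hammingDist (flipi i x) (flipi i y) = hammingDist x y := by
  unfold hammingDist
  congr 1
  ext j
  by_cases h : j = i
  · subst h; simp [flipi_apply_i]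
  · simp [flipi_apply_ne _ _ _ h]

lemma mem_image_flipi {n : ℕ} (i : Fin n) (U : Finset (Fin n → Bool)) (x : Fin n → Bool) :
    x ∈ U.image (flipi i) ↔ flipi i x ∈ U := by
  simp only [Finset.mem_image]
  constructor
  · rintro ⟨u, hu, rfl⟩; rwa [flipi_invol]
  · intro h; exact ⟨flipi i x, h, flipi_invol i x⟩

lemma update_self' {n : ℕ} (i : Fin n) (x : Fin n → Bool) :
    Function.update x i (x i) = x := Function.update_eq_self i x

lemma symm_eq {n : ℕ} (i : Fin n) (U : Finset (Fin n → Bool)) :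
    ((U.image fun u => Function.update u i true) ∪
      (U.image fun u => Function.update u i false)) = U ∪ U.image (flipi i) := by
  ext x
  simp only [Finset.mem_union, Finset.mem_image]
  constructor
  · rintro (⟨u, hu, rfl⟩ | ⟨u, hu, rfl⟩)
    · cases hb : u i
      · right; exact ⟨u, hu, by simp [flipi, hb]⟩
      · left; rw [← hb, update_self']; exact hu
    · cases hb : u i
      · left; rw [← hb, update_self']; exact hu
      · right; exact ⟨u, hu, by simp [flipi, hb]⟩
  · rintro (hx | ⟨u, hu, rfl⟩)
    · cases hb : x i
      · right; exact ⟨x, hx, by rw [← hb, update_self']⟩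
      · left; exact ⟨x, hx, by rw [← hb, update_self']⟩
    · cases hb : u i
      · left; exact ⟨u, hu, by simp [flipi, hb]⟩
      · right; exact ⟨u, hu, by simp [flipi, hb]⟩

lemma edgePairs_eq_sum {n : ℕ} (W : Finset (Fin n → Bool)) :
    edgePairs W = ∑ x : Fin n → Bool, ∑ y : Fin n → Bool,
      (if x ∈ W ∧ y ∈ W ∧ hammingDist x y = 1 then 1 else 0) := by
  rw [edgePairs]
  rw [show ((W ×ˢ W).filter fun p => hammingDist p.1 p.2 = 1) =
      ((Finset.univ ×ˢ Finset.univ).filter fun p : (Fin n → Bool) × (Fin n → Bool) =>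
        p.1 ∈ W ∧ p.2 ∈ W ∧ hammingDist p.1 p.2 = 1) by
    ext p; simp [Finset.mem_filter, Finset.mem_product]; tauto]
  rw [Finset.card_filter, Finset.sum_product]

lemma edgePairs_image_flipi {n : ℕ} (i : Fin n) (U : Finset (Fin n → Bool)) :
    edgePairs (U.image (flipi i)) = edgePairs U := by
  have hbij : Function.Bijective (flipi i) := Function.Involutive.bijective (flipi_invol i)
  rw [edgePairs_eq_sum, edgePairs_eq_sum]
  refine (Fintype.sum_bijective (flipi i) hbij _ _ fun x => ?_).symm
  refine Fintype.sum_bijective (flipi i) hbij _ _ fun y => ?_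
  congr 1
  simp only [mem_image_flipi, flipi_invol, hd_flipi_flipi, eq_iff_iff]

lemma card_eq_sum_ite {α : Type*} [Fintype α] [DecidableEq α] (s : Finset α) :
    s.card = ∑ x : α, (if x ∈ s then 1 else 0) := by
  simp [Finset.sum_ite_mem]

lemma pointwise_key {n : ℕ} (i : Fin n) (U : Finset (Fin n → Bool)) (x y : Fin n → Bool) :
    (if x ∈ U ∧ y ∈ U ∧ hammingDist x y = 1 then 1 else 0) +
      (if x ∈ U.image (flipi i) ∧ y ∈ U.image (flipi i) ∧ hammingDist x y = 1 then 1 else 0) +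
      (if y = flipi i x ∧ x ∈ U \ U.image (flipi i) then 1 else 0) +
      (if x = flipi i y ∧ y ∈ U \ U.image (flipi i) then 1 else 0) ≤
    (if x ∈ U ∪ U.image (flipi i) ∧ y ∈ U ∪ U.image (flipi i) ∧ hammingDist x y = 1
      then 1 else 0) +
      (if x ∈ U ∩ U.image (flipi i) ∧ y ∈ U ∩ U.image (flipi i) ∧ hammingDist x y = 1
      then 1 else 0) := by
  simp only [Finset.mem_union, Finset.mem_inter, Finset.mem_sdiff, mem_image_flipi]
  by_cases hxy : y = flipi i x
  · subst hxy
    by_cases ha : x ∈ U <;> by_cases hb : flipi i x ∈ U <;>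
      simp [ha, hb, hd_flipi, flipi_invol]
  · have hyx : ¬ (x = flipi i y) := by
      intro h; exact hxy (by rw [h, flipi_invol])
    simp only [hxy, hyx, false_and, if_false, add_zero]
    split_ifs <;> first | omega | tauto

lemma slack_sum1 {n : ℕ} (i : Fin n) (U : Finset (Fin n → Bool)) :
    ∑ x : Fin n → Bool, ∑ y : Fin n → Bool,
      (if y = flipi i x ∧ x ∈ U \ U.image (flipi i) then 1 else 0) =
    (U \ U.image (flipi i)).card := by
  rw [_root_.card_eq_sum_ite]
  refine Finset.sum_congr rfl fun x _ => ?_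
  by_cases hx : x ∈ U \ U.image (flipi i) <;> simp [hx]

lemma slack_sum2 {n : ℕ} (i : Fin n) (U : Finset (Fin n → Bool)) :
    ∑ x : Fin n → Bool, ∑ y : Fin n → Bool,
      (if x = flipi i y ∧ y ∈ U \ U.image (flipi i) then 1 else 0) =
    (U \ U.image (flipi i)).card := by
  rw [Finset.sum_comm, _root_.card_eq_sum_ite]
  refine Finset.sum_congr rfl fun y _ => ?_
  by_cases hy : y ∈ U \ U.image (flipi i) <;> simp [hy]

lemma key_count {n : ℕ} (i : Fin n) (U : Finset (Fin n → Bool)) :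
    edgePairs U + edgePairs (U.image (flipi i)) + 2 * (U \ U.image (flipi i)).card ≤
      edgePairs (U ∪ U.image (flipi i)) + edgePairs (U ∩ U.image (flipi i)) := by
  rw [edgePairs_eq_sum U, edgePairs_eq_sum (U.image (flipi i)), edgePairs_eq_sum (U ∪ U.image (flipi i)), edgePairs_eq_sum (U ∩ U.image (flipi i))]
  rw [two_mul]
  nth_rewrite 1 [← slack_sum1 i U]
  nth_rewrite 1 [← slack_sum2 i U]
  rw [← Finset.sum_add_distrib, ← Finset.sum_add_distrib, ← Finset.sum_add_distrib,
    ← Finset.sum_add_distrib]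
  refine Finset.sum_le_sum fun x _ => ?_
  rw [← Finset.sum_add_distrib, ← Finset.sum_add_distrib, ← Finset.sum_add_distrib,
    ← Finset.sum_add_distrib]
  exact Finset.sum_le_sum fun y _ => le_of_le_of_eq (le_of_eq_of_le (by ring) (pointwise_key i U x y)) rfl

lemma dist_flipi_le {n : ℕ} (i : Fin n) (H : Finset (Fin n → Bool)) (hH : H.Nonempty)
    (u : Fin n → Bool) :
    (H.inf' hH fun h => hammingDist (flipi i u) h) ≤
      (H.inf' hH fun h => hammingDist u h) + 1 := by
  obtain ⟨h0, hh0, hval⟩ := Finset.exists_mem_eq_inf' hH (fun h => hammingDist u h)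
  calc (H.inf' hH fun h => hammingDist (flipi i u) h) ≤ hammingDist (flipi i u) h0 :=
        Finset.inf'_le _ hh0
    _ ≤ hammingDist (flipi i u) u + hammingDist u h0 := hammingDist_triangle _ _ _
    _ = (H.inf' hH fun h => hammingDist u h) + 1 := by
        rw [hammingDist_comm, hd_flipi, hval]; omega

lemma sum_dist_image_le {n : ℕ} (i : Fin n) (H : Finset (Fin n → Bool)) (hH : H.Nonempty)
    (U : Finset (Fin n → Bool)) :
    ∑ v ∈ U.image (flipi i), (H.inf' hH fun h => hammingDist v h) ≤
      (∑ u ∈ U, (H.inf' hH fun h => hammingDist u h)) + (U \ U.image (flipi i)).card := by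
  set d : (Fin n → Bool) → ℕ := fun v => H.inf' hH fun h => hammingDist v h with hd
  rw [Finset.sum_image (fun x _ y _ h => flipi_injective i h)]
  have hsplit : ∀ f : (Fin n → Bool) → ℕ,
      ∑ u ∈ U, f u = ∑ u ∈ U ∩ U.image (flipi i), f u + ∑ u ∈ U \ U.image (flipi i), f u :=
    fun f => (Finset.sum_inter_add_sum_sdiff U (U.image (flipi i)) f).symm
  rw [hsplit (fun u => d (flipi i u)), hsplit d]
  have h1 : ∑ u ∈ U ∩ U.image (flipi i), d (flipi i u) = ∑ u ∈ U ∩ U.image (flipi i), d u := by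
    refine Finset.sum_nbij' (flipi i) (flipi i) ?_ ?_ ?_ ?_ ?_
    · intro a ha
      rw [Finset.mem_inter] at ha ⊢
      rw [mem_image_flipi] at ha ⊢
      rw [flipi_invol]
      exact ⟨ha.2, ha.1⟩
    · intro a ha
      rw [Finset.mem_inter] at ha ⊢
      rw [mem_image_flipi] at ha ⊢
      rw [flipi_invol]
      exact ⟨ha.2, ha.1⟩
    · intro a _; exact flipi_invol i a
    · intro a _; exact flipi_invol i a
    · intro a _; rfl
  have h2 : ∑ u ∈ U \ U.image (flipi i), d (flipi i u) ≤
      (∑ u ∈ U \ U.image (flipi i), d u) + (U \ U.image (flipi i)).card := by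
    calc ∑ u ∈ U \ U.image (flipi i), d (flipi i u) ≤
        ∑ u ∈ U \ U.image (flipi i), (d u + 1) :=
          Finset.sum_le_sum fun u _ => dist_flipi_le i H hH u
      _ = (∑ u ∈ U \ U.image (flipi i), d u) + (U \ U.image (flipi i)).card := by
          rw [Finset.sum_add_distrib, Finset.sum_const, smul_eq_mul, mul_one]
  omega

/-- If `U` is a nonempty set achieving the maximum discounted edge density `α`, then
symmetrizing `U` with respect to coordinate `i` does not decrease `g`. -/
theorem stmt5 {n : ℕ} (i : Fin n) (H : Finset (Fin n → Bool)) (hH : H.Nonempty)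
    (α : ℝ) (U : Finset (Fin n → Bool)) (hU : U.Nonempty)
    (hmax : ∀ W : Finset (Fin n → Bool), W.Nonempty → Phi H hH W ≤ α)
    (hUα : Phi H hH U = α) :
    gFun H hH α U ≤
      gFun H hH α
        ((U.image fun u => Function.update u i true) ∪
          (U.image fun u => Function.update u i false)) := by
  rw [symm_eq i U]
  set σU := U.image (flipi i) with hσdef
  set D := U ∩ σU with hDdef
  have dR : (Fin n → Bool) → ℝ := fun v => ((H.inf' hH fun h => hammingDist v h : ℕ) : ℝ)
  -- cast facts
  have keyR : (edgePairs U : ℝ) + edgePairs σU + 2 * (U \ σU).card ≤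
      edgePairs (U ∪ σU) + edgePairs D := by
    exact_mod_cast key_count i U
  have epσ : (edgePairs σU : ℝ) = edgePairs U := by
    exact_mod_cast congrArg (Nat.cast (R := ℝ)) (edgePairs_image_flipi i U)
  have sumR : (∑ u ∈ U ∪ σU, ((H.inf' hH fun h => hammingDist u h : ℕ) : ℝ)) + ∑ u ∈ D, ((H.inf' hH fun h => hammingDist u h : ℕ) : ℝ) = (∑ u ∈ U, ((H.inf' hH fun h => hammingDist u h : ℕ) : ℝ)) + ∑ u ∈ σU, ((H.inf' hH fun h => hammingDist u h : ℕ) : ℝ) :=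
    Finset.sum_union_inter
  have distR : (∑ u ∈ σU, ((H.inf' hH fun h => hammingDist u h : ℕ) : ℝ)) ≤ (∑ u ∈ U, ((H.inf' hH fun h => hammingDist u h : ℕ) : ℝ)) + (U \ σU).card := by
    have := sum_dist_image_le i H hH U
    have := (Nat.cast_le (α := ℝ)).2 this
    push_cast at this
    simpa using this
  have cardσ : (σU.card : ℝ) = U.card := by
    rw [hσdef, Finset.card_image_of_injective U (flipi_injective i)]
  have cardR : ((U ∪ σU).card : ℝ) + D.card = U.card + σU.card := by
    exact_mod_cast congrArg (Nat.cast (R := ℝ)) (Finset.card_union_add_card_inter U σU)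
  have cardsplit : (D.card : ℝ) + (U \ σU).card = U.card := by
    exact_mod_cast congrArg (Nat.cast (R := ℝ)) (Finset.card_inter_add_card_sdiff U σU)
  have hcU : (0 : ℝ) < U.card := by
    exact_mod_cast Finset.card_pos.2 hU
  have hU0 : (edgePairs U : ℝ) / 2 - (∑ u ∈ U, ((H.inf' hH fun h => hammingDist u h : ℕ) : ℝ)) - α * U.card = 0 := by
    rw [Phi, div_eq_iff (ne_of_gt hcU)] at hUα
    rw [← hUα]; ring
  have hD0 : (edgePairs D : ℝ) / 2 - (∑ u ∈ D, ((H.inf' hH fun h => hammingDist u h : ℕ) : ℝ)) - α * D.card ≤ 0 := by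
    by_cases hD : D.Nonempty
    · have h := hmax D hD
      have hcD : (0 : ℝ) < D.card := by exact_mod_cast Finset.card_pos.2 hD
      rw [Phi, div_le_iff₀ hcD] at h
      nlinarith
    · rw [Finset.not_nonempty_iff_eq_empty] at hD
      rw [hD]
      simp [edgePairs]
  have cardRα : α * ((U ∪ σU).card : ℝ) + α * (D.card : ℝ) =
      α * (U.card : ℝ) + α * (σU.card : ℝ) := by
    rw [← mul_add, ← mul_add, cardR]
  have cardσα : α * (σU.card : ℝ) = α * (U.card : ℝ) := by rw [cardσ]
  rw [gFun, gFun]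
  linarith
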